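/- If two finite Borel measures μ and ν on ℝ have the same Stieltjes transform on the upper half plane, then μ = ν. -/

import Mathlib

/-!
For `γ > 0`, `Im S_μ (x + iγ) = π ∫ cauchyPDFReal t γ x dμ(t)` is `π` times the density of the
convolution of `μ` with the Cauchy distribution of scale `γ`. So the Stieltjes transform determines
these convolutions. Tested against a bounded continuous `g`, Fubini turns them into
`∫ (∫ g x · cauchyPDFReal t γ x dx) dμ(t)`. The inner integral tends to `g t` as `γ → 0`, because
the Cauchy densities form an approximate identity, so the limit is `∫ g dμ`.
-/

open MeasureTheory Filter Topology Complex BoundedContinuousFunction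
open scoped NNReal Real

namespace ProbabilityTheory

lemma cauchyPDFReal_add_mul (x₀ : ℝ) {γ : ℝ≥0} (hγ : γ ≠ 0) (u : ℝ) :
    γ * cauchyPDFReal x₀ γ (x₀ + γ * u) = cauchyPDFReal 0 1 u := by
  have : (γ : ℝ) ≠ 0 := by exact_mod_cast hγ
  simp only [cauchyPDFReal_def, NNReal.coe_one]
  field_simp
  ring

lemma integral_mul_cauchyPDFReal (g : ℝ → ℝ) (x₀ : ℝ) {γ : ℝ≥0} (hγ : γ ≠ 0) :
    ∫ x, g x * cauchyPDFReal x₀ γ x = ∫ u, g (x₀ + γ * u) * cauchyPDFReal 0 1 u := by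
  have hγ' : (0 : ℝ) < γ := by positivity
  simp_rw [← cauchyPDFReal_add_mul x₀ hγ, mul_left_comm _ (γ : ℝ)]
  rw [integral_const_mul,
    Measure.integral_comp_mul_left (fun y => g (x₀ + y) * cauchyPDFReal x₀ γ (x₀ + y)),
    integral_add_left_eq_self (fun x => g x * cauchyPDFReal x₀ γ x), abs_inv, abs_of_pos hγ',
    smul_eq_mul, mul_inv_cancel_left₀ hγ'.ne']

lemma tendsto_integral_mul_cauchyPDFReal (g : ℝ →ᵇ ℝ) (x₀ : ℝ) :
    Tendsto (fun γ => ∫ x, g x * cauchyPDFReal x₀ γ x) (𝓝[>] 0) (𝓝 (g x₀)) := by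
  have hlim : Tendsto (fun γ : ℝ≥0 => ∫ u, g (x₀ + γ * u) * cauchyPDFReal 0 1 u) (𝓝 0)
      (𝓝 (∫ u, g x₀ * cauchyPDFReal 0 1 u)) := by
    refine tendsto_integral_filter_of_dominated_convergence (fun u => ‖g‖ * cauchyPDFReal 0 1 u)
      (Eventually.of_forall fun γ => by fun_prop) (Eventually.of_forall fun γ => ?_)
      ((integrable_cauchyPDFReal 0).const_mul _) (ae_of_all _ fun u => ?_)
    · refine ae_of_all _ fun u => ?_
      rw [norm_mul, Real.norm_of_nonneg (cauchyPDF_pos 0 one_ne_zero u).le]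
      exact mul_le_mul_of_nonneg_right (g.norm_coe_le_norm _) (cauchyPDF_pos 0 one_ne_zero u).le
    · refine Tendsto.mul_const _ (g.continuous.tendsto x₀ |>.comp ?_)
      simpa using tendsto_const_nhds.add ((NNReal.continuous_coe.tendsto' 0 0 rfl).mul_const u)
  rw [integral_const_mul, integral_cauchyPDFReal_eq_one 0 one_ne_zero, mul_one] at hlim
  refine (hlim.mono_left nhdsWithin_le_nhds).congr' ?_
  filter_upwards [self_mem_nhdsWithin] with γ hγ
  exact (integral_mul_cauchyPDFReal g x₀ (ne_of_gt hγ)).symm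

lemma integrable_mul_cauchyPDFReal_prod (μ : Measure ℝ) [IsFiniteMeasure μ] (g : ℝ →ᵇ ℝ)
    (γ : ℝ≥0) :
    Integrable (fun p : ℝ × ℝ => g p.2 * cauchyPDFReal p.1 γ p.2) (μ.prod volume) := by
  have hmeas : AEStronglyMeasurable (fun p : ℝ × ℝ => cauchyPDFReal p.1 γ p.2) (μ.prod volume) := by
    unfold cauchyPDFReal; fun_prop
  have hint : Integrable (fun p : ℝ × ℝ => cauchyPDFReal p.1 γ p.2) (μ.prod volume) := by
    rcases eq_or_ne γ 0 with rfl | hγ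
    · simp
    refine (integrable_prod_iff hmeas).2 ⟨ae_of_all _ fun t => integrable_cauchyPDFReal t, ?_⟩
    simp_rw [Real.norm_of_nonneg (cauchyPDF_pos _ hγ _).le, integral_cauchyPDFReal_eq_one _ hγ]
    exact integrable_const 1
  exact hint.bdd_mul (g.continuous.comp continuous_snd).aestronglyMeasurable
    (ae_of_all _ fun p => g.norm_coe_le_norm p.2)

lemma integral_integral_mul_cauchyPDFReal_swap (μ : Measure ℝ) [IsFiniteMeasure μ]
    (g : ℝ →ᵇ ℝ) (γ : ℝ≥0) :
    ∫ t, (∫ x, g x * cauchyPDFReal t γ x) ∂μ = ∫ x, g x * ∫ t, cauchyPDFReal t γ x ∂μ := by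
  simp_rw [← integral_const_mul]
  exact integral_integral_swap (f := fun t x => g x * cauchyPDFReal t γ x)
    (integrable_mul_cauchyPDFReal_prod μ g γ)

lemma tendsto_integral_integral_mul_cauchyPDFReal (μ : Measure ℝ) [IsFiniteMeasure μ]
    (g : ℝ →ᵇ ℝ) :
    Tendsto (fun γ => ∫ t, (∫ x, g x * cauchyPDFReal t γ x) ∂μ) (𝓝[>] 0) (𝓝 (∫ t, g t ∂μ)) := by
  refine tendsto_integral_filter_of_dominated_convergence (fun _ => ‖g‖)
    (Eventually.of_forall fun γ =>
      (integrable_mul_cauchyPDFReal_prod μ g γ).integral_prod_left.aestronglyMeasurable)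
    ?_ (integrable_const _) (ae_of_all _ (tendsto_integral_mul_cauchyPDFReal g))
  filter_upwards [self_mem_nhdsWithin] with γ (hγ : 0 < γ)
  refine ae_of_all _ fun t => ?_
  calc ‖∫ x, g x * cauchyPDFReal t γ x‖ ≤ ∫ x, ‖g‖ * cauchyPDFReal t γ x :=
        norm_integral_le_of_norm_le ((integrable_cauchyPDFReal t).const_mul _)
          (ae_of_all _ fun x => by
            rw [norm_mul, Real.norm_of_nonneg (cauchyPDF_pos _ hγ.ne' _).le]
            exact mul_le_mul_of_nonneg_right (g.norm_coe_le_norm x) (cauchyPDF_pos _ hγ.ne' _).le)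
    _ = ‖g‖ := by rw [integral_const_mul, integral_cauchyPDFReal_eq_one _ hγ.ne', mul_one]

theorem ext_of_forall_integral_cauchyPDFReal_eq {μ ν : Measure ℝ} [IsFiniteMeasure μ]
    [IsFiniteMeasure ν]
    (h : ∀ γ : ℝ≥0, 0 < γ → ∀ x, ∫ t, cauchyPDFReal t γ x ∂μ = ∫ t, cauchyPDFReal t γ x ∂ν) :
    μ = ν := by
  refine ext_of_forall_integral_eq_of_IsFiniteMeasure fun g =>
    tendsto_nhds_unique (tendsto_integral_integral_mul_cauchyPDFReal μ g)
      ((tendsto_integral_integral_mul_cauchyPDFReal ν g).congr' ?_)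
  filter_upwards [self_mem_nhdsWithin] with γ hγ
  simp only [integral_integral_mul_cauchyPDFReal_swap, h γ hγ]

end ProbabilityTheory

open ProbabilityTheory

lemma im_inv_ofReal_sub (x : ℝ) (γ : ℝ≥0) (t : ℝ) :
    (((t : ℂ) - (x + γ * I))⁻¹).im = π * cauchyPDFReal t γ x := by
  rw [inv_im, normSq_apply, cauchyPDFReal_def]
  simp only [sub_re, sub_im, ofReal_re, ofReal_im, add_re, add_im, mul_re, mul_im, I_re, I_im]
  field_simp
  ring

lemma integrable_inv_ofReal_sub (μ : Measure ℝ) [IsFiniteMeasure μ] {z : ℂ} (hz : z.im ≠ 0) :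
    Integrable (fun t : ℝ => ((t : ℂ) - z)⁻¹) μ := by
  refine Integrable.of_bound (by fun_prop) |z.im|⁻¹ (ae_of_all _ fun t => ?_)
  rw [norm_inv]
  refine inv_anti₀ (abs_pos.2 hz) ?_
  simpa using abs_im_le_norm ((t : ℂ) - z)

lemma im_integral_inv_ofReal_sub (μ : Measure ℝ) [IsFiniteMeasure μ] {γ : ℝ≥0} (hγ : γ ≠ 0)
    (x : ℝ) :
    (∫ t : ℝ, ((t : ℂ) - (x + γ * I))⁻¹ ∂μ).im = π * ∫ t, cauchyPDFReal t γ x ∂μ := by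
  have hz : ((x : ℂ) + γ * I).im ≠ 0 := by simpa using hγ
  rw [← integral_const_mul, ← RCLike.im_to_complex, ← integral_im (integrable_inv_ofReal_sub μ hz)]
  simp_rw [RCLike.im_to_complex, im_inv_ofReal_sub]

/-- If two finite Borel measures on `ℝ` have the same Stieltjes transform on the
upper half plane, then they are equal. -/
theorem stieltjes_transform_injective (μ ν : Measure ℝ)
    [IsFiniteMeasure μ] [IsFiniteMeasure ν]
    (h : ∀ z : ℂ, 0 < z.im →
      ∫ t : ℝ, ((t : ℂ) - z)⁻¹ ∂μ = ∫ t : ℝ, ((t : ℂ) - z)⁻¹ ∂ν) :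
    μ = ν := by
  refine ext_of_forall_integral_cauchyPDFReal_eq fun γ hγ x => ?_
  have hS := congrArg im (h (x + γ * I) (by simpa using hγ))
  rw [im_integral_inv_ofReal_sub μ hγ.ne', im_integral_inv_ofReal_sub ν hγ.ne'] at hS
  exact mul_left_cancel₀ Real.pi_ne_zero hS
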